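/- Derivative formula for the charged Hawking mass (equation (2.14) in spherical symmetry). Let n ≥ 3, λ ≥ 0, r₊ > 0, and let V, k_I, k_S, E_I be spherically symmetric charged radial data on [r₊,∞) (V, k_S differentiable, V > 0 on (r₊,∞)) satisfying the radial Einstein–Maxwell constraint equations with uncharged energy density μ̂ and radial momentum density Ĵ_ν and the Gauss law, with charge q. Then for every r > r₊: m_CH′(r) = (8π·r^{n−1}/(n−1))·[ μ̂(r) − (k_S(r)/H(r))·Ĵ_ν(r) ]. -/

import Mathlib

open Real Filter

/-- Mean curvature of the coordinate sphere of radius `r`: `H = (n-1)√(V r)/r`. -/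
noncomputable def sphMeanCurv (n : ℕ) (V : ℝ → ℝ) (r : ℝ) : ℝ :=
  ((n : ℝ) - 1) * Real.sqrt (V r) / r

/-- Scalar curvature of `g = V⁻¹dr² + r²·(round metric)`:
`R = (n-1) r^{1-n} (d/dr)[r^{n-2}(1 - V)]`. -/
noncomputable def sphScalCurv (n : ℕ) (V : ℝ → ℝ) (r : ℝ) : ℝ :=
  ((n : ℝ) - 1) / r ^ (n - 1) * deriv (fun ρ => ρ ^ (n - 2) * (1 - V ρ)) r

/-- The charged Hawking mass
`m_CH(r) = (r^{n-2}/2)[1 - V + r² k_S²/(n-1)²] + λ r^n/2 + q²/(2 r^{n-2})`. -/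
noncomputable def chargedHawkingMass (n : ℕ) (lam q : ℝ) (V kS : ℝ → ℝ) (r : ℝ) : ℝ :=
  r ^ (n - 2) / 2 * (1 - V r + r ^ 2 * kS r ^ 2 / ((n : ℝ) - 1) ^ 2)
    + lam * r ^ n / 2 + q ^ 2 / (2 * r ^ (n - 2))

/-! Differentiating term by term leaves the derivatives of `r^{n-2}(1 - V)`, which is
`r^{n-1} R / (n-1)` by the definition of `R`, and of `k_S`. The Hamiltonian constraint trades `R`
for `μ̂`; subtracting `2 k_S / H` times the momentum constraint cancels the `k_I`-terms; and the
Gauss law turns the derivative of the charge term `q² / (2 r^{n-2})` into `-r^{n-1} V E_I² / (n-1)`,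
which is the electric energy removed from `μ̂`. -/

theorem hasDerivAt_inv_pow {𝕜 : Type*} [NontriviallyNormedField 𝕜] (k : ℕ) {r : 𝕜} (hr : r ≠ 0) :
    HasDerivAt (fun ρ : 𝕜 => (ρ ^ k)⁻¹) (-k / r ^ (k + 1)) r := by
  have h := hasDerivAt_zpow (-k : ℤ) r (Or.inl hr)
  simp only [zpow_neg, zpow_natCast] at h
  refine h.congr_deriv ?_
  rw [show (-k : ℤ) - 1 = -((k + 1 : ℕ) : ℤ) by push_cast; ring, zpow_neg, zpow_natCast]
  push_cast
  ring

theorem hasDerivAt_chargedHawkingMass {n : ℕ} (hn : 2 ≤ n) (lam q : ℝ) {V kS : ℝ → ℝ} {r : ℝ}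
    (hr : r ≠ 0) (hV : DifferentiableAt ℝ V r) (hkS : DifferentiableAt ℝ kS r) :
    HasDerivAt (chargedHawkingMass n lam q V kS)
      (r ^ (n - 1) / (2 * ((n : ℝ) - 1)) *
          (sphScalCurv n V r + kS r ^ 2 + kS r ^ 2 / ((n : ℝ) - 1)
            + 2 * r * kS r * deriv kS r / ((n : ℝ) - 1) + n * ((n : ℝ) - 1) * lam)
        - ((n : ℝ) - 2) * q ^ 2 / (2 * r ^ (n - 1))) r := by
  obtain ⟨k, rfl⟩ : ∃ k, n = k + 2 := ⟨n - 2, by omega⟩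
  have hcurv : HasDerivAt (fun ρ => ρ ^ k * (1 - V ρ))
      (deriv (fun ρ => ρ ^ k * (1 - V ρ)) r) r :=
    ((differentiableAt_pow k).mul ((differentiableAt_const 1).sub hV)).hasDerivAt
  have hextr : HasDerivAt (fun ρ => ρ ^ (k + 2) * kS ρ ^ 2)
      ((k + 2 : ℕ) * r ^ (k + 1) * kS r ^ 2 + r ^ (k + 2) * (2 * kS r ^ 1 * deriv kS r)) r :=
    (hasDerivAt_pow (k + 2) r).mul (hkS.hasDerivAt.pow 2)
  have hsum := (((hcurv.div_const 2).add (hextr.div_const (2 * ((k : ℝ) + 1) ^ 2))).add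
    (((hasDerivAt_pow (k + 2) r).const_mul lam).div_const 2)).add
    ((hasDerivAt_inv_pow k hr).const_mul (q ^ 2 / 2))
  refine (hsum.congr_of_eventuallyEq (.of_forall fun ρ => ?_)).congr_deriv ?_
  · simp only [chargedHawkingMass, Nat.add_sub_cancel, Pi.add_apply]
    push_cast
    rw [show (k : ℝ) + 2 - 1 = k + 1 by ring]
    field_simp
    ring
  · simp only [sphScalCurv, Nat.add_sub_cancel, show k + 2 - 1 = k + 1 by omega]
    push_cast
    rw [show (k : ℝ) + 2 - 1 = k + 1 by ring]
    field_simp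
    ring

theorem energy_sub_momentum_eq_of_constraints {μ J H R kI kS dkS V E Λ c r : ℝ} (hH : H ≠ 0)
    (hμ : 16 * π * μ = R + (kI + kS) ^ 2 - kI ^ 2 - kS ^ 2 / c - 2 * V * E ^ 2 + Λ)
    (hJ : 8 * π * J = H * (kI - kS / c - r * dkS / c)) :
    16 * π * (μ - kS / H * J) =
      R + kS ^ 2 + kS ^ 2 / c + 2 * r * kS * dkS / c - 2 * V * E ^ 2 + Λ := by
  have hkJ : 16 * π * (kS / H * J) = 2 * kS * (kI - kS / c - r * dkS / c) := by
    rw [← mul_div_cancel_left₀ (kI - kS / c - r * dkS / c) hH, ← hJ]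
    ring
  rw [mul_sub, hμ, hkJ]
  ring

theorem sq_eq_of_sqrt_mul_mul_sqrt_mul_eq {a x v e q : ℝ} (ha : 0 ≤ a) (hv : 0 ≤ v)
    (h : √a * x * √v * e = q) : q ^ 2 = a * x ^ 2 * v * e ^ 2 := by
  rw [← h, mul_pow, mul_pow, mul_pow, sq_sqrt ha, sq_sqrt hv]

theorem sphMeanCurv_pos {n : ℕ} (hn : 2 ≤ n) {V : ℝ → ℝ} {r : ℝ} (hV : 0 < V r) (hr : 0 < r) :
    0 < sphMeanCurv n V r := by
  have hn1 : (0 : ℝ) < n - 1 := by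
    rw [sub_pos, Nat.one_lt_cast]
    omega
  unfold sphMeanCurv
  positivity

theorem chargedHawkingMass_deriv (n : ℕ) (hn : 3 ≤ n) (lam rp : ℝ)
    (hrp : 0 < rp) (V kI kS EI μ J : ℝ → ℝ) (q : ℝ)
    (hVpos : ∀ r, rp < r → 0 < V r)
    (hVd : ∀ r, rp < r → DifferentiableAt ℝ V r)
    (hkSd : ∀ r, rp < r → DifferentiableAt ℝ kS r)
    -- Hamiltonian constraint
    (hmu : ∀ r, rp < r → 16 * π * μ r =
      sphScalCurv n V r + (kI r + kS r) ^ 2 - kI r ^ 2 - kS r ^ 2 / ((n : ℝ) - 1)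
        - 2 * V r * EI r ^ 2 + (n : ℝ) * ((n : ℝ) - 1) * lam)
    -- momentum constraint
    (hJ : ∀ r, rp < r → 8 * π * J r =
      sphMeanCurv n V r *
        (kI r - kS r / ((n : ℝ) - 1) - r * deriv kS r / ((n : ℝ) - 1)))
    -- Gauss law with charge `q`
    (hq : ∀ r, rp ≤ r →
      Real.sqrt (2 / (((n : ℝ) - 1) * ((n : ℝ) - 2))) * r ^ (n - 1) * Real.sqrt (V r) * EI r
        = q) :
    ∀ r, rp < r →
      HasDerivAt (chargedHawkingMass n lam q V kS)
        (8 * π * r ^ (n - 1) / ((n : ℝ) - 1) *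
          (μ r - kS r / sphMeanCurv n V r * J r)) r := by
  intro r hr
  have hr0 : 0 < r := hrp.trans hr
  have hn3 : (3 : ℝ) ≤ n := by exact_mod_cast hn
  have hn2 : (0 : ℝ) < n - 2 := by linarith
  have hn1 : (0 : ℝ) < n - 1 := by linarith
  have henergy := energy_sub_momentum_eq_of_constraints
    (sphMeanCurv_pos (by omega) (hVpos r hr) hr0).ne' (hmu r hr) (hJ r hr)
  have hcharge := sq_eq_of_sqrt_mul_mul_sqrt_mul_eq (by positivity) (hVpos r hr).le (hq r hr.le)
  refine (hasDerivAt_chargedHawkingMass (by omega) lam q hr0.ne' (hVd r hr) (hkSd r hr)).congr_deriv ?_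
  calc _ = r ^ (n - 1) / (2 * ((n : ℝ) - 1)) *
        (16 * π * (μ r - kS r / sphMeanCurv n V r * J r)) := by
        rw [henergy, hcharge]
        field_simp
        ring
    _ = _ := by
        field_simp
        ring
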